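/- arXiv:2412.15472 — 2 statements merged into one kernel-verified Lean document; each statement's English description precedes it below -/
import Mathlib

section
/- Let f : ℝ≥0 → ℝ ∪ {−∞} be a strictly increasing function that is continuous on ℝ>0, and suppose that for every positive-admitting normalized instance with two agents, every allocation chosen by the additive welfarist rule with f is EF1. Then f is strictly concave, i.e., for any distinct x, y ∈ ℝ≥0 and α ∈ (0, 1), f(αx + (1−α)y) > α·f(x) + (1−α)·f(y). -/
open scoped BigOperators

noncomputable section

namespace FairDiv

/-- The bundle of goods received by agent `i` under the assignment `A` of goods to agents. -/
def bundle {n m : ℕ} (A : Fin m → Fin n) (i : Fin n) : Finset (Fin m) :=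
  Finset.univ.filter fun g => A g = i

/-- Additive utility of agent `i` for a set `S` of goods. -/
def util {n m : ℕ} (u : Fin n → Fin m → ℝ) (i : Fin n) (S : Finset (Fin m)) : ℝ :=
  ∑ g ∈ S, u i g

/-- Envy-freeness up to one good. -/
def EF1 {n m : ℕ} (u : Fin n → Fin m → ℝ) (A : Fin m → Fin n) : Prop :=
  ∀ i j : Fin n, bundle A j ≠ ∅ →
    ∃ g ∈ bundle A j, util u i ((bundle A j).erase g) ≤ util u i (bundle A i)

/-- Welfare of an allocation under the additive welfarist rule with function `f`. -/
def welfare {n m : ℕ} (f : ℝ → EReal) (u : Fin n → Fin m → ℝ) (A : Fin m → Fin n) : EReal :=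
  ∑ i : Fin n, f (util u i (bundle A i))

/-- An allocation is chosen by the additive welfarist rule with `f` if it maximizes welfare. -/
def Chosen {n m : ℕ} (f : ℝ → EReal) (u : Fin n → Fin m → ℝ) (A : Fin m → Fin n) : Prop :=
  ∀ B : Fin m → Fin n, welfare f u B ≤ welfare f u A

/-- An instance is positive-admitting if some allocation gives everyone positive utility. -/
def PositiveAdmitting {n m : ℕ} (u : Fin n → Fin m → ℝ) : Prop :=
  ∃ B : Fin m → Fin n, ∀ i : Fin n, 0 < util u i (bundle B i)

def IdenticalGood {n m : ℕ} (u : Fin n → Fin m → ℝ) : Prop :=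
  ∀ i : Fin n, ∃ a : ℝ, 0 < a ∧ ∀ g : Fin m, u i g = a

def TwoValue {n m : ℕ} (u : Fin n → Fin m → ℝ) : Prop :=
  ∃ a₁ a₂ : ℝ, a₁ ≠ a₂ ∧ 0 ≤ a₁ ∧ 0 ≤ a₂ ∧ ∀ i g, u i g = a₁ ∨ u i g = a₂

def Normalized {n m : ℕ} (u : Fin n → Fin m → ℝ) : Prop :=
  ∀ i j : Fin n, util u i Finset.univ = util u j Finset.univ

def IntegerValued {n m : ℕ} (u : Fin n → Fin m → ℝ) : Prop :=
  ∀ i g, ∃ z : ℕ, u i g = (z : ℝ)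

def Binary {n m : ℕ} (u : Fin n → Fin m → ℝ) : Prop :=
  ∀ i g, u i g = 0 ∨ u i g = 1

/-- `Δ_{f,k}(x) = f((k+1)x) − f(kx)`, valued in `EReal` (it is `+∞` iff `f(kx) = −∞`). -/
def Delta (f : ℝ → EReal) (k : ℕ) (x : ℝ) : EReal :=
  f (((k : ℝ) + 1) * x) - f ((k : ℝ) * x)

/-- Condition 1: `Δ_{f,k}(b) > Δ_{f,k+1}(a)` for all `k ∈ ℤ≥0` and `a, b ∈ ℝ>0`. -/
def Cond1 (f : ℝ → EReal) : Prop :=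
  ∀ k : ℕ, ∀ a b : ℝ, 0 < a → 0 < b → Delta f (k + 1) a < Delta f k b

/-- Condition 1a: `Δ_{f,k}` is constant on `ℝ>0` for every `k ∈ ℤ>0`. -/
def Cond1a (f : ℝ → EReal) : Prop :=
  ∀ k : ℕ, 0 < k → ∀ x y : ℝ, 0 < x → 0 < y → Delta f k x = Delta f k y

/-- Condition 2. -/
def Cond2 (f : ℝ → EReal) : Prop :=
  ∀ a b c d : ℝ, 0 ≤ a → 0 ≤ b → 0 ≤ c → 0 ≤ d →
    min a b ≤ min c d → a * b < c * d → f a + f b < f c + f d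

/-- Condition 3: `Δ_{f,k}(b) > Δ_{f,k+1}(a)` for all `k ∈ ℤ≥0` and `a, b ∈ ℤ>0`. -/
def Cond3 (f : ℝ → EReal) : Prop :=
  ∀ k : ℕ, ∀ a b : ℕ, 0 < a → 0 < b → Delta f (k + 1) (a : ℝ) < Delta f k (b : ℝ)

/-- Condition 3a. -/
def Cond3a (f : ℝ → EReal) : Prop :=
  ∀ k l : ℕ, l < k → ∀ a b : ℕ, 0 < a → 0 < b → Delta f k (a : ℝ) < Delta f l (b : ℝ)

/-- Condition 3b: `Δ_{f,k}(1) > Δ_{f,k+1}(a) > Δ_{f,k+2}(1)` for `k ∈ ℤ≥0`, `a ∈ ℤ>0`. -/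
def Cond3b (f : ℝ → EReal) : Prop :=
  ∀ k : ℕ, ∀ a : ℕ, 0 < a →
    Delta f (k + 1) (a : ℝ) < Delta f k 1 ∧ Delta f (k + 2) 1 < Delta f (k + 1) (a : ℝ)

/-- Condition 4: `Δ_{f,k}(1) > Δ_{f,k+1}(1)` for all `k ∈ ℤ≥0`. -/
def Cond4 (f : ℝ → EReal) : Prop :=
  ∀ k : ℕ, Delta f (k + 1) 1 < Delta f k 1

/-- Condition 5. -/
def Cond5 (f : ℝ → EReal) : Prop :=
  ∀ a b k l r : ℕ, 0 < a → 0 < b → b ≤ a → l * b + r * a < (k + 1) * b →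
    Delta f (k + 1) (a : ℝ) <
        f (((l : ℝ) + 1) * (b : ℝ) + (r : ℝ) * (a : ℝ)) - f ((l : ℝ) * (b : ℝ) + (r : ℝ) * (a : ℝ))
      ∧ Delta f (k + 2) 1 < Delta f (k + 1) (a : ℝ)

/-- Condition 6a: `f((k+1)b−1) − f(kb−1) > Δ_{f,k}(a)` for all `k, a, b ∈ ℤ>0`. -/
def Cond6a (f : ℝ → EReal) : Prop :=
  ∀ k a b : ℕ, 0 < k → 0 < a → 0 < b →
    Delta f k (a : ℝ) < f (((k : ℝ) + 1) * (b : ℝ) - 1) - f ((k : ℝ) * (b : ℝ) - 1)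

/-- Condition 6b: `f(y+b) − f(y) > f(x+a) − f(x)` whenever `x/a ≥ (y+1)/b`. -/
def Cond6b (f : ℝ → EReal) : Prop :=
  ∀ a b : ℕ, ∀ x y : ℕ, 0 < a → 0 < b → ((y : ℝ) + 1) / (b : ℝ) ≤ (x : ℝ) / (a : ℝ) →
    f ((x : ℝ) + (a : ℝ)) - f (x : ℝ) < f ((y : ℝ) + (b : ℝ)) - f (y : ℝ)

/-- Modified logarithmic function `λ_c(x) = log (x + c)`, with `log 0 = −∞`. -/
def lam (c : ℝ) (x : ℝ) : EReal :=
  if x + c = 0 then ⊥ else ((Real.log (x + c) : ℝ) : EReal)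

/-- The `p`-mean function `φ_p`, with `φ_p(0) = −∞` for `p ≤ 0`. -/
def phi (p : ℝ) (x : ℝ) : EReal :=
  if 0 < p then ((x ^ p : ℝ) : EReal)
  else if x = 0 then ⊥
  else if p = 0 then ((Real.log x : ℝ) : EReal)
  else ((-(x ^ p) : ℝ) : EReal)

/-- Modified harmonic number `h_c` on nonnegative integers. -/
def hmod (c : ℝ) (x : ℕ) : EReal :=
  if c = -1 then
    (if x = 0 then (⊥ : EReal)
     else (((∑ t ∈ Finset.range (x - 1), (1 : ℝ) / ((t : ℝ) + 1)) : ℝ) : EReal))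
  else (((∑ t ∈ Finset.range x, (1 : ℝ) / ((t : ℝ) + 1 + c)) : ℝ) : EReal)

/-- Condition 3b for a function defined on nonnegative integers. -/
def Cond3bNat (f : ℕ → EReal) : Prop :=
  ∀ k : ℕ, ∀ a : ℕ, 0 < a →
    f ((k + 2) * a) - f ((k + 1) * a) < f (k + 1) - f k
    ∧ f (k + 3) - f (k + 2) < f ((k + 2) * a) - f ((k + 1) * a)

end FairDiv

/-!
Give both agents `2j + 2` goods, each worth `ε` to both of them. EF1 forces every
welfare-maximising allocation to split them `j + 1 : j + 1`, while the `j : j + 2` split is not EF1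
and hence not welfare-maximising; so `f (jε) + f ((j + 2)ε) < 2 f ((j + 1)ε)`, i.e. the increments
of `f` along every grid `εℕ` strictly decrease. Approximating points of `(0, ∞)` by grid points
`⌈tn⌉ / n` and using continuity makes `f` concave there; monotonicity extends this to `0` when
`f 0 ≠ ⊥`; and since every `y > 0` is the middle of a grid triple `y ± y / (j + 1)` of arbitrarily
small step, the concavity is strict.
-/

open Set Filter Topology

section Concavity

variable {F : ℝ → ℝ}

theorem slope_anti_of_add_le_two_mul {g : ℕ → ℝ} {p : ℕ}
    (hg : ∀ j ≥ p, g j + g (j + 2) ≤ 2 * g (j + 1)) {a c b : ℕ} (hpa : p ≤ a) (hac : a ≤ c)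
    (hcb : c ≤ b) : (g b - g c) * (c - a) ≤ (g c - g a) * (b - c) := by
  set D : ℕ → ℝ := fun k => g (k + 1) - g k
  have hD : AntitoneOn D (Ici p) := antitoneOn_nat_Ici_of_succ_le fun k hk => by
    have := hg k hk
    simp only [D]
    linarith
  have hlower : ∀ k, g a + k * D (a + k) ≤ g (a + k) := by
    intro k
    induction k with
    | zero => simp
    | succ k ih =>
      have hD' := hD (mem_Ici.2 (by omega)) (mem_Ici.2 (by omega)) (by omega : a + k ≤ a + (k + 1))
      have := mul_le_mul_of_nonneg_left hD' k.cast_nonneg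
      simp only [D, ← add_assoc] at this hD' ih ⊢
      push_cast
      linarith
  have hupper : ∀ l, g (c + l) ≤ g c + l * D c := by
    intro l
    induction l with
    | zero => simp
    | succ l ih =>
      have := hD (mem_Ici.2 (hpa.trans hac)) (mem_Ici.2 (by omega)) (by omega : c ≤ c + l)
      simp only [D, ← add_assoc] at this ih ⊢
      push_cast
      linarith
  obtain ⟨k, rfl⟩ := Nat.exists_eq_add_of_le hac
  obtain ⟨l, rfl⟩ := Nat.exists_eq_add_of_le hcb
  push_cast
  calc (g (a + k + l) - g (a + k)) * (a + k - a) ≤ (l * D (a + k)) * k := by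
        rw [add_sub_cancel_left]
        exact mul_le_mul_of_nonneg_right (by linarith [hupper l]) k.cast_nonneg
    _ = (k * D (a + k)) * l := by ring
    _ ≤ (g (a + k) - g a) * (a + k + l - (a + k)) := by
        rw [add_sub_cancel_left]
        exact mul_le_mul_of_nonneg_right (by linarith [hlower k]) l.cast_nonneg

theorem concaveOn_Ioi_of_add_le_two_mul (hF : ContinuousOn F (Ioi 0))
    (hgrid : ∀ ε > 0, ∀ j : ℕ, 0 < j → F (j * ε) + F ((j + 2) * ε) ≤ 2 * F ((j + 1) * ε)) :
    ConcaveOn ℝ (Ioi 0) F := by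
  refine concaveOn_iff_slope_anti_adjacent.2 ⟨convex_Ioi 0, fun x y z hx _ hxy hyz => ?_⟩
  rw [div_le_div_iff₀ (sub_pos.2 hyz) (sub_pos.2 hxy)]
  have happrox : ∀ t : ℝ, 0 < t → Tendsto (fun n : ℕ => (⌈t * n⌉₊ : ℝ) / n) atTop (𝓝 t) ∧
      Tendsto (fun n : ℕ => F ((⌈t * n⌉₊ : ℝ) / n)) atTop (𝓝 (F t)) := by
    intro t ht
    have h := (tendsto_nat_ceil_mul_div_atTop ht.le).comp tendsto_natCast_atTop_atTop
    exact ⟨h, (hF.continuousAt (Ioi_mem_nhds ht)).tendsto.comp h⟩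
  obtain ⟨hx', hFx⟩ := happrox x hx
  obtain ⟨hy', hFy⟩ := happrox y (hx.trans hxy)
  obtain ⟨hz', hFz⟩ := happrox z (hx.trans (hxy.trans hyz))
  refine le_of_tendsto_of_tendsto ((hFz.sub hFy).mul (hy'.sub hx'))
    ((hFy.sub hFx).mul (hz'.sub hy')) ?_
  filter_upwards [eventually_gt_atTop 0] with n hn
  have hn' : (0 : ℝ) < n := Nat.cast_pos.2 hn
  set g : ℕ → ℝ := fun k => F (k / n)
  have hg : ∀ j ≥ 1, g j + g (j + 2) ≤ 2 * g (j + 1) := fun j hj => by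
    simpa [g, div_eq_mul_inv] using hgrid (1 / n) (by positivity) j hj
  have key := slope_anti_of_add_le_two_mul hg (a := ⌈x * n⌉₊) (c := ⌈y * n⌉₊) (b := ⌈z * n⌉₊)
    (Nat.ceil_pos.2 (mul_pos hx hn')) (Nat.ceil_mono (by gcongr)) (Nat.ceil_mono (by gcongr))
  simp only [← sub_div, mul_div_assoc']
  exact div_le_div_of_nonneg_right key hn'.le

theorem ConcaveOn.concaveOn_Ici_of_Ioi {a : ℝ} (hF : ConcaveOn ℝ (Ioi a) F)
    (ha : ∀ t > a, F a ≤ F t) : ConcaveOn ℝ (Ici a) F := by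
  refine concaveOn_iff_slope_anti_adjacent.2 ⟨convex_Ici a, fun x y z hx hz hxy hyz => ?_⟩
  rcases (mem_Ici.1 hx).lt_or_eq with hx | rfl
  · exact hF.slope_anti_adjacent hx (hx.trans (hxy.trans hyz)) hxy hyz
  have hlim : Tendsto (fun t => (F y - F a) / (y - t)) (𝓝[>] a) (𝓝 ((F y - F a) / (y - a))) :=
    ((continuousAt_const.div (continuousAt_const.sub continuousAt_id)
      (sub_ne_zero.2 hxy.ne')).tendsto).mono_left nhdsWithin_le_nhds
  refine ge_of_tendsto hlim ?_
  filter_upwards [Ioo_mem_nhdsGT hxy] with t ⟨hat, hty⟩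
  calc (F z - F y) / (z - y) ≤ (F y - F t) / (y - t) :=
        hF.slope_anti_adjacent hat (hat.trans (hty.trans hyz)) hty hyz
    _ ≤ (F y - F a) / (y - t) := by gcongr; exact ha t hat

theorem ConcaveOn.strictConcaveOn_of_exists_add_lt {s : Set ℝ} (hF : ConcaveOn ℝ s F)
    (h : ∀ y ∈ interior s, ∀ δ > 0, ∃ ε ∈ Ioc (0 : ℝ) δ, F (y - ε) + F (y + ε) < 2 * F y) :
    StrictConcaveOn ℝ s F := by
  refine strictConcaveOn_iff_slope_strict_anti_adjacent.2 ⟨hF.1, fun x y z hx hz hxy hyz => ?_⟩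
  have hsub : Icc x z ⊆ s := hF.1.ordConnected.out hx hz
  have hy : y ∈ interior s :=
    isOpen_Ioo.subset_interior_iff.2 (Ioo_subset_Icc_self.trans hsub) ⟨hxy, hyz⟩
  obtain ⟨ε, ⟨hε, hεδ⟩, hmid⟩ := h y hy _ (lt_min (sub_pos.2 hxy) (sub_pos.2 hyz))
  have hεx := hεδ.trans (min_le_left _ _)
  have hεz := hεδ.trans (min_le_right _ _)
  have hanti := hF.slope_anti (hsub ⟨hxy.le, hyz.le⟩)
  have mem : ∀ t ∈ Icc x z, t ≠ y → t ∈ s \ {y} := fun t ht hne => ⟨hsub ht, hne⟩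
  calc (F z - F y) / (z - y) = slope F y z := (slope_def_field F y z).symm
    _ ≤ slope F y (y + ε) := hanti (mem _ ⟨by linarith, by linarith⟩ (by linarith))
        (mem _ ⟨by linarith, le_rfl⟩ hyz.ne') (by linarith)
    _ < slope F y (y - ε) := by
        rw [slope_def_field, slope_def_field, add_sub_cancel_left, sub_sub_cancel_left, div_neg,
          ← neg_div, div_lt_div_iff_of_pos_right hε]
        linarith
    _ ≤ slope F y x := hanti (mem _ ⟨le_rfl, hxy.le.trans hyz.le⟩ hxy.ne)
        (mem _ ⟨by linarith, by linarith⟩ (by linarith)) (by linarith)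
    _ = (F y - F x) / (y - x) := by rw [slope_comm, slope_def_field]

theorem exists_sub_add_lt_of_grid
    (hgrid : ∀ ε > 0, ∀ j : ℕ, 0 < j → F (j * ε) + F ((j + 2) * ε) < 2 * F ((j + 1) * ε))
    {y δ : ℝ} (hy : 0 < y) (hδ : 0 < δ) : ∃ ε ∈ Ioc (0 : ℝ) δ, F (y - ε) + F (y + ε) < 2 * F y := by
  obtain ⟨j, hj⟩ := exists_nat_gt (y / δ)
  have hj0 : (0 : ℝ) < j := (div_pos hy hδ).trans hj
  refine ⟨y / (j + 1), ⟨by positivity, ?_⟩, ?_⟩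
  · rw [div_le_iff₀ (by positivity)]
    rw [div_lt_iff₀ hδ] at hj
    linarith
  · convert hgrid (y / (j + 1)) (by positivity) j (by exact_mod_cast hj0) using 3 <;>
      field_simp <;> ring

end Concavity

namespace FairDiv

section IdenticalGoods

open Finset

variable {n m : ℕ}

lemma util_const (ε : ℝ) (i : Fin n) (S : Finset (Fin m)) :
    util (fun _ _ => ε) i S = #S * ε := by
  simp [util]

lemma sum_card_bundle (A : Fin m → Fin n) : ∑ i, #(bundle A i) = m := by
  have := card_eq_sum_card_fiberwise (f := A) (s := univ) (t := univ) fun _ _ =>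
    mem_coe.2 (mem_univ _)
  rw [card_univ, Fintype.card_fin] at this
  exact this.symm

lemma card_bundle_le_of_EF1 {ε : ℝ} (hε : 0 < ε) {A : Fin m → Fin n}
    (hA : EF1 (fun _ _ => ε) A) (i j : Fin n) : #(bundle A j) ≤ #(bundle A i) + 1 := by
  rcases (bundle A j).eq_empty_or_nonempty with h | h
  · simp [h]
  obtain ⟨g, hg, hle⟩ := hA i j h.ne_empty
  rw [util_const, util_const, card_erase_of_mem hg] at hle
  have : #(bundle A j) - 1 ≤ #(bundle A i) := by exact_mod_cast le_of_mul_le_mul_right hle hε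
  omega

lemma exists_chosen [NeZero n] (f : ℝ → EReal) (u : Fin n → Fin m → ℝ) : ∃ A, Chosen f u A :=
  Finite.exists_max (welfare f u)

lemma welfare_lt_of_not_EF1 {f : ℝ → EReal} {u : Fin n → Fin m → ℝ} {A B : Fin m → Fin n}
    (hrule : ∀ C, Chosen f u C → EF1 u C) (hA : Chosen f u A) (hB : ¬ EF1 u B) :
    welfare f u B < welfare f u A :=
  (hA B).lt_of_ne fun h => hB (hrule B fun C => (hA C).trans h.ge)

def splitAt (k : ℕ) : Fin m → Fin 2 := fun g => if (g : ℕ) < k then 0 else 1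

lemma card_bundle_splitAt_zero {k : ℕ} (hk : k ≤ m) : #(bundle (splitAt (m := m) k) 0) = k := by
  refine (congrArg card ?_).trans (Fin.card_filter_val_lt.trans (min_eq_right hk))
  ext g
  simp [bundle, splitAt]

lemma card_bundle_splitAt_one {k : ℕ} (hk : k ≤ m) :
    #(bundle (splitAt (m := m) k) 1) = m - k := by
  have := sum_card_bundle (splitAt (m := m) k)
  rw [Fin.sum_univ_two, card_bundle_splitAt_zero hk] at this
  omega

lemma positiveAdmitting_const {ε : ℝ} (hε : 0 < ε) (hm : 2 ≤ m) :
    PositiveAdmitting (fun (_ : Fin 2) (_ : Fin m) => ε) := by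
  refine ⟨splitAt 1, Fin.forall_fin_two.2 ⟨?_, ?_⟩⟩ <;>
    simp only [util_const, card_bundle_splitAt_zero, card_bundle_splitAt_one, (by omega : 1 ≤ m)]
  · simpa
  · have : (0 : ℝ) < (m - 1 : ℕ) := by exact_mod_cast (by omega : 0 < m - 1)
    positivity

theorem add_lt_of_forall_chosen_EF1 {f : ℝ → EReal} {ε : ℝ} (hε : 0 < ε) (j : ℕ)
    (hrule : ∀ A : Fin (2 * j + 2) → Fin 2, Chosen f (fun _ _ => ε) A → EF1 (fun _ _ => ε) A) :
    f (j * ε) + f ((j + 2) * ε) < f ((j + 1) * ε) + f ((j + 1) * ε) := by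
  obtain ⟨A, hA⟩ := exists_chosen f fun (_ : Fin 2) (_ : Fin (2 * j + 2)) => ε
  have hbalanced : #(bundle A 0) = j + 1 ∧ #(bundle A 1) = j + 1 := by
    have := card_bundle_le_of_EF1 hε (hrule A hA) 0 1
    have := card_bundle_le_of_EF1 hε (hrule A hA) 1 0
    have := sum_card_bundle A
    rw [Fin.sum_univ_two] at this
    omega
  have hsplit : ¬ EF1 (fun _ _ => ε) (splitAt (m := 2 * j + 2) j) := fun h => by
    have := card_bundle_le_of_EF1 hε h 0 1
    rw [card_bundle_splitAt_zero (by omega), card_bundle_splitAt_one (by omega)] at this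
    omega
  have hlt := welfare_lt_of_not_EF1 hrule hA hsplit
  simp only [welfare, Fin.sum_univ_two, util_const, hbalanced, card_bundle_splitAt_zero,
    card_bundle_splitAt_one, (by omega : j ≤ 2 * j + 2),
    (by omega : 2 * j + 2 - j = j + 2)] at hlt
  convert hlt using 4 <;> push_cast <;> ring

end IdenticalGoods

section ERealValued

variable {f : ℝ → EReal}

theorem concaveOn_toReal (hfmono : StrictMonoOn f (Ici 0)) (hftop : ∀ x : ℝ, 0 ≤ x → f x ≠ ⊤)
    (hfcont : ContinuousOn f (Ioi 0))
    (hgrid : ∀ ε > 0, ∀ j : ℕ, 0 < j →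
      (f (j * ε)).toReal + (f ((j + 2) * ε)).toReal ≤ 2 * (f ((j + 1) * ε)).toReal) :
    ConcaveOn ℝ {t | 0 ≤ t ∧ f t ≠ ⊥} fun t => (f t).toReal := by
  have hpos : ∀ t > 0, f t ≠ ⊥ := fun t ht => ne_bot_of_gt (hfmono self_mem_Ici ht.le ht)
  have hconc : ConcaveOn ℝ (Ioi 0) fun t => (f t).toReal :=
    concaveOn_Ioi_of_add_le_two_mul (fun t ht => ContinuousAt.comp_continuousWithinAt
      (EReal.tendsto_toReal (hftop t ht.le) (hpos t ht)) (hfcont t ht)) hgrid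
  by_cases h0 : f 0 = ⊥
  · convert hconc using 1
    ext t
    exact ⟨fun ht => ht.1.lt_of_ne (by rintro rfl; exact ht.2 h0), fun ht => ⟨ht.le, hpos t ht⟩⟩
  · convert hconc.concaveOn_Ici_of_Ioi fun t ht =>
      EReal.toReal_le_toReal (hfmono self_mem_Ici ht.le ht).le h0 (hftop t ht.le) using 1
    ext t
    exact ⟨fun ht => ht.1, fun ht => ⟨ht, (mem_Ici.1 ht).eq_or_lt.elim (· ▸ h0) (hpos t)⟩⟩

theorem strictConcaveOn_toReal (hfmono : StrictMonoOn f (Ici 0))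
    (hftop : ∀ x : ℝ, 0 ≤ x → f x ≠ ⊤) (hfcont : ContinuousOn f (Ioi 0))
    (hgrid : ∀ ε > 0, ∀ j : ℕ, f (j * ε) + f ((j + 2) * ε) < f ((j + 1) * ε) + f ((j + 1) * ε)) :
    StrictConcaveOn ℝ {t | 0 ≤ t ∧ f t ≠ ⊥} fun t => (f t).toReal := by
  have hcoe : ∀ t > 0, ((f t).toReal : EReal) = f t := fun t ht =>
    EReal.coe_toReal (hftop t ht.le) (ne_bot_of_gt (hfmono self_mem_Ici ht.le ht))
  have hFgrid : ∀ ε > 0, ∀ j : ℕ, 0 < j →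
      (f (j * ε)).toReal + (f ((j + 2) * ε)).toReal < 2 * (f ((j + 1) * ε)).toReal := by
    intro ε hε j hj
    have := hgrid ε hε j
    rw [← hcoe (j * ε) (by positivity), ← hcoe ((j + 2) * ε) (by positivity),
      ← hcoe ((j + 1) * ε) (by positivity)] at this
    rw [two_mul]
    exact_mod_cast this
  refine (concaveOn_toReal hfmono hftop hfcont fun ε hε j hj => (hFgrid ε hε j hj).le)
    |>.strictConcaveOn_of_exists_add_lt fun y hy δ hδ =>
      exists_sub_add_lt_of_grid (F := fun t => (f t).toReal) hFgrid ?_ hδ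
  simpa using interior_mono (fun t (ht : t ∈ {t | 0 ≤ t ∧ f t ≠ ⊥}) => mem_Ici.2 ht.1) hy

theorem lt_of_strictConcaveOn_toReal
    (hF : StrictConcaveOn ℝ {t | 0 ≤ t ∧ f t ≠ ⊥} fun t => (f t).toReal)
    (hftop : ∀ x : ℝ, 0 ≤ x → f x ≠ ⊤) {x y α : ℝ} (hx : 0 ≤ x) (hy : 0 ≤ y) (hxy : x ≠ y)
    (hα0 : 0 < α) (hα1 : α < 1) (hz : f (α * x + (1 - α) * y) ≠ ⊥) :
    (α : EReal) * f x + ((1 - α : ℝ) : EReal) * f y < f (α * x + (1 - α) * y) := by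
  by_cases hbot : f x = ⊥ ∨ f y = ⊥
  · have : (α : EReal) * f x + ((1 - α : ℝ) : EReal) * f y = ⊥ := by
      rcases hbot with h | h
      · rw [h, EReal.coe_mul_bot_of_pos hα0, EReal.bot_add]
      · rw [h, EReal.coe_mul_bot_of_pos (sub_pos.2 hα1), EReal.add_bot]
    exact this ▸ bot_lt_iff_ne_bot.2 hz
  obtain ⟨hxb, hyb⟩ := not_or.1 hbot
  have := hF.2 ⟨hx, hxb⟩ ⟨hy, hyb⟩ hxy hα0 (sub_pos.2 hα1) (add_sub_cancel α 1)
  rw [← EReal.coe_toReal (hftop x hx) hxb, ← EReal.coe_toReal (hftop y hy) hyb,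
    ← EReal.coe_toReal (hftop _ (by positivity)) hz]
  exact_mod_cast this

end ERealValued

theorem real_normalized_two_necessary (f : ℝ → EReal)
    (hfmono : StrictMonoOn f (Set.Ici (0 : ℝ)))
    (hftop : ∀ x : ℝ, 0 ≤ x → f x ≠ ⊤)
    (hfcont : ContinuousOn f (Set.Ioi (0 : ℝ)))
    (hEF1 : (∀ m : ℕ, ∀ u : Fin 2 → Fin m → ℝ, (∀ i g, 0 ≤ u i g) →
        Normalized u → PositiveAdmitting u →
        ∀ A : Fin m → Fin 2, Chosen f u A → EF1 u A)) :
    ∀ x y : ℝ, 0 ≤ x → 0 ≤ y → x ≠ y → ∀ α : ℝ, 0 < α → α < 1 →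
      ((α : EReal) * f x + (((1 - α : ℝ)) : EReal) * f y < f (α * x + (1 - α) * y)) := by
  intro x y hx hy hxy α hα0 hα1
  have hgrid : ∀ ε > 0, ∀ j : ℕ,
      f (j * ε) + f ((j + 2) * ε) < f ((j + 1) * ε) + f ((j + 1) * ε) := fun ε hε j =>
    add_lt_of_forall_chosen_EF1 hε j <| hEF1 _ _ (fun _ _ => hε.le) (fun _ _ => rfl)
      (positiveAdmitting_const hε (by omega))
  have hz : 0 < α * x + (1 - α) * y := by
    rcases hx.eq_or_lt with rfl | hx
    · have := hy.lt_of_ne hxy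
      nlinarith
    · nlinarith
  exact lt_of_strictConcaveOn_toReal (strictConcaveOn_toReal hfmono hftop hfcont hgrid) hftop
    hx hy hxy hα0 hα1 (ne_bot_of_gt (hfmono self_mem_Ici hz.le hz))

end FairDiv
end
end

section
/- Let f : ℝ≥0 → ℝ ∪ {−∞} be a strictly increasing function that satisfies Condition 2. Then for every positive-admitting normalized instance with two agents, every allocation chosen by the additive welfarist rule with f is EF1. -/
open scoped BigOperators

noncomputable section

namespace FairDiv

/-! Condition 2 says that a chosen allocation with utilities `(x, y)` admits no allocation with
utilities `(x', y')` such that `min x y ≤ min x' y'` and `x * y < x' * y'`. Suppose agent `i`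
envies agent `j` even after removing any single good from `A_j`. If `i` values `A_j` more than
`j` does, swapping the two bundles is such an improvement; normalization makes `j` gain too.
Otherwise, move to `i` a good `g ∈ A_j` with `u_j(g) / u_i(g) ≤ u_j(A_j) / u_i(A_j) ≤ 1`, which
exists because the ratio of the sums is a weighted mean of the ratios of the goods; the envy
assumption `u_i(A_i) + u_i(g) < u_i(A_j)` then makes the transfer an improvement. -/

theorem exists_mem_mul_sum_le_mul_sum {ι R : Type*} [CommRing R] [LinearOrder R]
    [IsStrictOrderedRing R] (s : Finset ι) (p q : ι → R) (hp : ∀ a ∈ s, 0 ≤ p a)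
    (hq : ∀ a ∈ s, 0 ≤ q a) (hP : 0 < ∑ a ∈ s, p a) :
    ∃ a ∈ s, 0 < p a ∧ q a * ∑ b ∈ s, p b ≤ p a * ∑ b ∈ s, q b := by
  by_contra! h
  obtain ⟨a, ha, hpa⟩ : ∃ a ∈ s, 0 < p a :=
    Finset.exists_lt_of_sum_lt (by rwa [Finset.sum_const_zero])
  have hle : ∀ b ∈ s, p b * ∑ c ∈ s, q c ≤ q b * ∑ c ∈ s, p c := by
    intro b hb
    rcases (hp b hb).eq_or_lt with hpb | hpb
    · rw [← hpb, zero_mul]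
      exact mul_nonneg (hq b hb) hP.le
    · exact (h b hb hpb).le
  have := Finset.sum_lt_sum hle ⟨a, ha, h a ha hpa⟩
  rw [← Finset.sum_mul, ← Finset.sum_mul, mul_comm] at this
  exact this.false

theorem min_le_min_and_mul_lt_of_add_eq {x y z w : ℝ} (hx : 0 ≤ x) (hxz : x < z) (hyz : y < z)
    (h : x + z = w + y) : min x y ≤ min z w ∧ x * y < z * w :=
  ⟨(min_le_left x y).trans (le_min hxz.le (by linarith)), by nlinarith⟩

theorem min_le_min_and_mul_lt_add_sub {x y z p q : ℝ} (hx : 0 ≤ x) (hp : 0 < p)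
    (hzy : z ≤ y) (hxz : x + p < z) (hqz : q * z ≤ p * y) :
    min x y ≤ min (x + p) (y - q) ∧ x * y < (x + p) * (y - q) := by
  have hz : 0 < z := by linarith
  have hxy : x < y - q := by
    refine lt_of_mul_lt_mul_right ?_ hz.le
    nlinarith
  refine ⟨(min_le_left x y).trans (le_min (by linarith) hxy.le), ?_⟩
  refine lt_of_mul_lt_mul_right ?_ hz.le
  have hpy : 0 < p * y := mul_pos hp (by linarith)
  nlinarith [mul_le_mul_of_nonneg_right hqz (by linarith : 0 ≤ x + p),
    mul_lt_mul_of_pos_left hxz hpy]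

theorem univ_eq_pair_of_ne {i j : Fin 2} (h : i ≠ j) :
    (Finset.univ : Finset (Fin 2)) = {i, j} := by
  revert i j
  decide

section Bundles

variable {n m : ℕ}

@[simp]
theorem mem_bundle {A : Fin m → Fin n} {i : Fin n} {g : Fin m} : g ∈ bundle A i ↔ A g = i := by
  simp [bundle]

theorem bundle_perm_comp (σ : Equiv.Perm (Fin n)) (A : Fin m → Fin n) (i : Fin n) :
    bundle (σ ∘ A) i = bundle A (σ.symm i) := by
  ext g
  simp [← Equiv.eq_symm_apply]

theorem bundle_update_self (A : Fin m → Fin n) (g : Fin m) (i : Fin n) :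
    bundle (Function.update A g i) i = insert g (bundle A i) := by
  ext a
  by_cases ha : a = g <;> simp [ha]

theorem bundle_update_of_ne (A : Fin m → Fin n) (g : Fin m) {i k : Fin n} (hk : k ≠ i) :
    bundle (Function.update A g i) k = (bundle A k).erase g := by
  ext a
  by_cases ha : a = g <;> simp [ha, hk.symm]

theorem sum_util_bundle (u : Fin n → Fin m → ℝ) (A : Fin m → Fin n) (k : Fin n) :
    ∑ i, util u k (bundle A i) = util u k Finset.univ :=
  Finset.sum_fiberwise _ A _

theorem util_nonneg (u : Fin n → Fin m → ℝ) (hu : ∀ i g, 0 ≤ u i g) (i : Fin n)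
    (S : Finset (Fin m)) : 0 ≤ util u i S :=
  Finset.sum_nonneg fun g _ => hu i g

theorem util_erase (u : Fin n → Fin m → ℝ) (i : Fin n) {S : Finset (Fin m)} {g : Fin m}
    (hg : g ∈ S) : util u i (S.erase g) = util u i S - u i g :=
  Finset.sum_erase_eq_sub hg

theorem util_erase_le (u : Fin n → Fin m → ℝ) (hu : ∀ i g, 0 ≤ u i g) (i : Fin n)
    (S : Finset (Fin m)) (g : Fin m) : util u i (S.erase g) ≤ util u i S :=
  Finset.sum_le_sum_of_subset_of_nonneg (Finset.erase_subset g S) fun a _ _ => hu i a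

theorem util_insert (u : Fin n → Fin m → ℝ) (i : Fin n) {S : Finset (Fin m)} {g : Fin m}
    (hg : g ∉ S) : util u i (insert g S) = u i g + util u i S :=
  Finset.sum_insert hg

end Bundles

section TwoAgents

variable {m : ℕ} {f : ℝ → EReal} {u : Fin 2 → Fin m → ℝ} {A : Fin m → Fin 2} {i j : Fin 2}

theorem util_bundle_add_util_bundle (u : Fin 2 → Fin m → ℝ) (A : Fin m → Fin 2) (k : Fin 2)
    (hij : i ≠ j) : util u k (bundle A i) + util u k (bundle A j) = util u k Finset.univ := by
  rw [← sum_util_bundle u A k, univ_eq_pair_of_ne hij, Finset.sum_pair hij]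

theorem welfare_eq_add (f : ℝ → EReal) (u : Fin 2 → Fin m → ℝ) (A : Fin m → Fin 2)
    (hij : i ≠ j) :
    welfare f u A = f (util u i (bundle A i)) + f (util u j (bundle A j)) := by
  rw [welfare, univ_eq_pair_of_ne hij, Finset.sum_pair hij]

theorem Chosen.mul_le_of_min_le (hf : Cond2 f) (hu : ∀ i g, 0 ≤ u i g) (hA : Chosen f u A)
    (hij : i ≠ j) (B : Fin m → Fin 2)
    (hmin : min (util u i (bundle A i)) (util u j (bundle A j)) ≤
      min (util u i (bundle B i)) (util u j (bundle B j))) :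
    util u i (bundle B i) * util u j (bundle B j) ≤
      util u i (bundle A i) * util u j (bundle A j) := by
  by_contra! h
  have := hf _ _ _ _ (util_nonneg u hu i _) (util_nonneg u hu j _) (util_nonneg u hu i _)
    (util_nonneg u hu j _) hmin h
  exact (hA B).not_gt (by rwa [welfare_eq_add f u A hij, welfare_eq_add f u B hij])

theorem Chosen.util_bundle_le_of_lt (hf : Cond2 f) (hu : ∀ i g, 0 ≤ u i g) (hnorm : Normalized u)
    (hA : Chosen f u A) (hij : i ≠ j)
    (hyz : util u j (bundle A j) < util u i (bundle A j)) :
    util u i (bundle A j) ≤ util u i (bundle A i) := by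
  by_contra! hxz
  have hB : ∀ k, bundle (Equiv.swap i j ∘ A) k = bundle A (Equiv.swap i j k) := by
    simp [bundle_perm_comp]
  have hsum := (util_bundle_add_util_bundle u A i hij).trans
    ((hnorm i j).trans (util_bundle_add_util_bundle u A j hij).symm)
  obtain ⟨hmin, hmul⟩ := min_le_min_and_mul_lt_of_add_eq (util_nonneg u hu i _) hxz hyz
    (by linarith)
  refine (hA.mul_le_of_min_le hf hu hij (Equiv.swap i j ∘ A) ?_).not_gt ?_
  · simpa only [hB, Equiv.swap_apply_left, Equiv.swap_apply_right] using hmin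
  · simpa only [hB, Equiv.swap_apply_left, Equiv.swap_apply_right] using hmul

theorem Chosen.exists_util_erase_le (hf : Cond2 f) (hu : ∀ i g, 0 ≤ u i g) (hA : Chosen f u A)
    (hij : i ≠ j) (hzy : util u i (bundle A j) ≤ util u j (bundle A j))
    (hj : (bundle A j).Nonempty) :
    ∃ g ∈ bundle A j, util u i ((bundle A j).erase g) ≤ util u i (bundle A i) := by
  by_contra! henvy
  obtain ⟨g₀, hg₀⟩ := hj
  have hx := util_nonneg u hu i (bundle A i)
  have hxz := (henvy g₀ hg₀).trans_le (util_erase_le u hu i _ g₀)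
  obtain ⟨g, hg, hpg, hqg⟩ := exists_mem_mul_sum_le_mul_sum (bundle A j) (u i) (u j)
    (fun a _ => hu i a) (fun a _ => hu j a) (hx.trans_lt hxz)
  have hgi : g ∉ bundle A i := by
    rw [mem_bundle]
    exact fun hgi => hij (hgi.symm.trans (mem_bundle.mp hg))
  have hBi : util u i (bundle (Function.update A g i) i) = util u i (bundle A i) + u i g := by
    rw [bundle_update_self, util_insert u i hgi, add_comm]
  have hBj : util u j (bundle (Function.update A g i) j) = util u j (bundle A j) - u j g := by
    rw [bundle_update_of_ne A g hij.symm, util_erase u j hg]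
  have hxpz := henvy g hg
  rw [util_erase u i hg] at hxpz
  obtain ⟨hmin, hmul⟩ := min_le_min_and_mul_lt_add_sub hx hpg hzy (by linarith) hqg
  refine (hA.mul_le_of_min_le hf hu hij (Function.update A g i) ?_).not_gt ?_ <;>
    rwa [hBi, hBj]

end TwoAgents

theorem real_normalized_two_sufficient_general (f : ℝ → EReal)
    (hcond : Cond2 f) :
    (∀ m : ℕ, ∀ u : Fin 2 → Fin m → ℝ, (∀ i g, 0 ≤ u i g) →
        Normalized u → PositiveAdmitting u →
        ∀ A : Fin m → Fin 2, Chosen f u A → EF1 u A) := by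
  intro m u hu hnorm _ A hA i j hj
  obtain ⟨g, hg⟩ := Finset.nonempty_iff_ne_empty.mpr hj
  rcases eq_or_ne i j with rfl | hij
  · exact ⟨g, hg, util_erase_le u hu i _ g⟩
  rcases le_or_gt (util u i (bundle A j)) (util u j (bundle A j)) with hzy | hyz
  · exact hA.exists_util_erase_le hcond hu hij hzy ⟨g, hg⟩
  · exact ⟨g, hg,
      (util_erase_le u hu i _ g).trans (hA.util_bundle_le_of_lt hcond hu hnorm hij hyz)⟩

theorem real_normalized_two_sufficient (f : ℝ → EReal)
    (hfmono : StrictMonoOn f (Set.Ici (0 : ℝ)))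
    (hftop : ∀ x : ℝ, 0 ≤ x → f x ≠ ⊤)
    (hcond : Cond2 f) :
    (∀ m : ℕ, ∀ u : Fin 2 → Fin m → ℝ, (∀ i g, 0 ≤ u i g) →
        Normalized u → PositiveAdmitting u →
        ∀ A : Fin m → Fin 2, Chosen f u A → EF1 u A) :=
  real_normalized_two_sufficient_general f hcond

end FairDiv
end
end
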